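/- arXiv:2503.11676 — 3 statements merged into one kernel-verified Lean document; each statement's English description precedes it below -/
import Mathlib

section
/- Let q > 2 be odd and write n = qm + r with 0 ≤ r < q and m ≥ 1. Then f_{2,q}(n) = 1 + f_{2,q}(1) + f_{2,q}(2) + ⋯ + f_{2,q}(m). -/
open Filter Real

/-- Number of representations of `n` as a sum of distinct terms of the form `p^a * q^b`. -/
noncomputable def fpq (p q n : ℕ) : ℕ :=
  Set.ncard {S : Finset ℕ | (∀ k ∈ S, ∃ a b : ℕ, k = p ^ a * q ^ b) ∧ S.sum id = n}

/-!
Split a representation `S` of `n` into its elements divisible by `q` and the rest. Since `q` is odd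
and `q > 1`, the rest are exactly the powers of two in `S`, so they form the binary expansion of
their sum and are determined by it. Dividing the elements divisible by `q` by `q` gives a
representation of some `t ≤ n / q`, and conversely every representation of such a `t`, multiplied
by `q` and completed by the binary expansion of `n - q t`, is a representation of `n`. Hence
`f(n) = f(0) + f(1) + ⋯ + f(⌊n / q⌋)` with `f(0) = 1`.
-/

open Finset

namespace Fpq

def twoPowers (s : ℕ) : Finset ℕ := s.bitIndices.toFinset.image (2 ^ ·)

lemma exists_eq_two_pow_of_mem_twoPowers {s k : ℕ} (hk : k ∈ twoPowers s) :
    ∃ a, k = 2 ^ a := by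
  obtain ⟨a, -, rfl⟩ := mem_image.mp hk
  exact ⟨a, rfl⟩

lemma sum_twoPowers (s : ℕ) : (twoPowers s).sum id = s := by
  rw [twoPowers, sum_image (Nat.pow_right_injective le_rfl).injOn]
  exact sum_toFinset_bitIndices_two_pow s

lemma twoPowers_sum {S : Finset ℕ} (hS : ∀ k ∈ S, ∃ a, k = 2 ^ a) :
    twoPowers (S.sum id) = S := by
  obtain ⟨E, -, rfl⟩ : ∃ E : Finset ℕ, ↑E ⊆ (Set.univ : Set ℕ) ∧ E.image (2 ^ ·) = S :=
    subset_set_image_iff.mp fun k hk => by simpa [eq_comm] using hS k hk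
  rw [sum_image (Nat.pow_right_injective le_rfl).injOn, twoPowers]
  simp only [id, toFinset_bitIndices_sum_two_pow]

def IsTwoQPow (q k : ℕ) : Prop := ∃ a b : ℕ, k = 2 ^ a * q ^ b

variable {q : ℕ}

lemma isTwoQPow_two_pow (a : ℕ) : IsTwoQPow q (2 ^ a) := ⟨a, 0, by simp⟩

lemma IsTwoQPow.mul_left {k : ℕ} (h : IsTwoQPow q k) : IsTwoQPow q (q * k) := by
  obtain ⟨a, b, rfl⟩ := h
  exact ⟨a, b + 1, by ring⟩

lemma IsTwoQPow.pos (hq : 0 < q) {k : ℕ} (h : IsTwoQPow q k) : 0 < k := by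
  obtain ⟨a, b, rfl⟩ := h
  positivity

lemma IsTwoQPow.exists_eq_two_pow {k : ℕ} (h : IsTwoQPow q k) (hk : ¬ q ∣ k) :
    ∃ a, k = 2 ^ a := by
  obtain ⟨a, _ | b, rfl⟩ := h
  · exact ⟨a, by simp⟩
  · exact absurd ⟨2 ^ a * q ^ b, by ring⟩ hk

lemma not_dvd_two_pow (hq : 1 < q) (hodd : Odd q) (a : ℕ) : ¬ q ∣ 2 ^ a := fun h =>
  hq.ne' ((hodd.coprime_two_right.pow_right a).eq_one_of_dvd h)

lemma IsTwoQPow.div (hq : 1 < q) (hodd : Odd q) {k : ℕ} (h : IsTwoQPow q k) (hk : q ∣ k) :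
    IsTwoQPow q (k / q) := by
  obtain ⟨a, _ | b, rfl⟩ := h
  · exact absurd (by simpa using hk) (not_dvd_two_pow hq hodd a)
  · exact ⟨a, b, by rw [pow_succ, ← mul_assoc, Nat.mul_div_cancel _ (by omega)]⟩

def quotPart (q : ℕ) (S : Finset ℕ) : Finset ℕ := {k ∈ S | q ∣ k}.image (· / q)

def glue (q s : ℕ) (T : Finset ℕ) : Finset ℕ := twoPowers s ∪ T.image (q * ·)

lemma image_mul_quotPart (S : Finset ℕ) :
    (quotPart q S).image (q * ·) = {k ∈ S | q ∣ k} := by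
  rw [quotPart, image_image]
  exact (image_congr fun k hk => Nat.mul_div_cancel' (mem_filter.mp hk).2).trans image_id

lemma mul_sum_quotPart (hq : 0 < q) (S : Finset ℕ) :
    q * (quotPart q S).sum id = {k ∈ S | q ∣ k}.sum id := by
  rw [← image_mul_quotPart, sum_image fun x _ y _ h => Nat.eq_of_mul_eq_mul_left hq h, mul_sum]
  rfl

lemma mul_sum_quotPart_le (hq : 0 < q) (S : Finset ℕ) :
    q * (quotPart q S).sum id ≤ S.sum id := by
  rw [mul_sum_quotPart hq]
  exact sum_le_sum_of_subset (filter_subset _ _)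

lemma not_dvd_of_mem_twoPowers (hq : 1 < q) (hodd : Odd q) {s k : ℕ} (hk : k ∈ twoPowers s) :
    ¬ q ∣ k := by
  obtain ⟨a, rfl⟩ := exists_eq_two_pow_of_mem_twoPowers hk
  exact not_dvd_two_pow hq hodd a

lemma filter_dvd_glue (hq : 1 < q) (hodd : Odd q) (s : ℕ) (T : Finset ℕ) :
    {k ∈ glue q s T | q ∣ k} = T.image (q * ·) := by
  rw [glue, filter_union, filter_false_of_mem fun k => not_dvd_of_mem_twoPowers hq hodd,
    filter_true_of_mem fun k hk => ?_, empty_union]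
  obtain ⟨k, -, rfl⟩ := mem_image.mp hk
  exact dvd_mul_right q k

lemma quotPart_glue (hq : 1 < q) (hodd : Odd q) (s : ℕ) (T : Finset ℕ) :
    quotPart q (glue q s T) = T := by
  rw [quotPart, filter_dvd_glue hq hodd, image_image]
  exact (image_congr fun k _ => Nat.mul_div_cancel_left k (by omega)).trans image_id

lemma sum_glue (hq : 1 < q) (hodd : Odd q) (s : ℕ) (T : Finset ℕ) :
    (glue q s T).sum id = s + q * T.sum id := by
  have hdisj : Disjoint (twoPowers s) (T.image (q * ·)) := disjoint_left.mpr fun k hk hk' => by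
    obtain ⟨k, -, rfl⟩ := mem_image.mp hk'
    exact not_dvd_of_mem_twoPowers hq hodd hk (dvd_mul_right q k)
  rw [glue, sum_union hdisj, sum_twoPowers,
    sum_image fun x _ y _ h => Nat.eq_of_mul_eq_mul_left (by omega) h, mul_sum]
  rfl

lemma glue_quotPart {S : Finset ℕ} (hS : ∀ k ∈ S, IsTwoQPow q k) :
    glue q ({k ∈ S | ¬ q ∣ k}.sum id) (quotPart q S) = S := by
  rw [glue, image_mul_quotPart, twoPowers_sum fun k hk => ?_, union_comm,
    filter_union_filter_not_eq]
  obtain ⟨hkS, hk⟩ := mem_filter.mp hk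
  exact (hS k hkS).exists_eq_two_pow hk

open scoped Classical in
noncomputable def reps (q n : ℕ) : Finset (Finset ℕ) :=
  {S ∈ (range (n + 1)).powerset | (∀ k ∈ S, IsTwoQPow q k) ∧ S.sum id = n}

lemma mem_reps {n : ℕ} {S : Finset ℕ} :
    S ∈ reps q n ↔ (∀ k ∈ S, IsTwoQPow q k) ∧ S.sum id = n := by
  simp only [reps, mem_filter, and_iff_right_iff_imp]
  rintro ⟨-, hsum⟩
  refine mem_powerset.mpr fun k hk => mem_range_succ_iff.mpr ?_
  exact hsum ▸ single_le_sum (f := id) (fun _ _ => Nat.zero_le _) hk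

lemma fpq_two_eq_card_reps (n : ℕ) : fpq 2 q n = #(reps q n) := by
  rw [fpq, ← Set.ncard_coe_finset]
  congr 1
  ext S
  exact mem_reps.symm

lemma reps_zero (hq : 0 < q) : reps q 0 = {∅} := by
  ext S
  rw [mem_reps, mem_singleton]
  refine ⟨fun ⟨hS, hsum⟩ => eq_empty_of_forall_notMem fun k hk => ?_, fun h => ?_⟩
  · exact ((hS k hk).pos hq).ne' (sum_eq_zero_iff.mp hsum k hk)
  · subst h
    simp

lemma quotPart_mem_reps (hq : 1 < q) (hodd : Odd q) {n : ℕ} {S : Finset ℕ}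
    (hS : S ∈ reps q n) : quotPart q S ∈ reps q ((quotPart q S).sum id) := by
  refine mem_reps.mpr ⟨fun k hk => ?_, rfl⟩
  obtain ⟨k, hkS, rfl⟩ := mem_image.mp hk
  obtain ⟨hkS, hdvd⟩ := mem_filter.mp hkS
  exact ((mem_reps.mp hS).1 k hkS).div hq hodd hdvd

lemma glue_mem_reps (hq : 1 < q) (hodd : Odd q) {n t : ℕ} (ht : q * t ≤ n) {T : Finset ℕ}
    (hT : T ∈ reps q t) : glue q (n - q * t) T ∈ reps q n := by
  obtain ⟨hTpow, hTsum⟩ := mem_reps.mp hT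
  refine mem_reps.mpr ⟨fun k hk => ?_, by rw [sum_glue hq hodd, hTsum]; omega⟩
  rcases mem_union.mp hk with hk | hk
  · obtain ⟨a, rfl⟩ := exists_eq_two_pow_of_mem_twoPowers hk
    exact isTwoQPow_two_pow a
  · obtain ⟨k, hkT, rfl⟩ := mem_image.mp hk
    exact (hTpow k hkT).mul_left

lemma sum_filter_not_dvd (hq : 0 < q) {n : ℕ} {S : Finset ℕ} (hS : S ∈ reps q n) :
    {k ∈ S | ¬ q ∣ k}.sum id = n - q * (quotPart q S).sum id := by
  have hsplit : {k ∈ S | q ∣ k}.sum id + {k ∈ S | ¬ q ∣ k}.sum id = S.sum id :=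
    sum_filter_add_sum_filter_not S (q ∣ ·) id
  rw [mul_sum_quotPart hq, ← (mem_reps.mp hS).2]
  omega

lemma card_filter_reps_sum_quotPart (hq : 1 < q) (hodd : Odd q) {n t : ℕ} (ht : q * t ≤ n) :
    #{S ∈ reps q n | (quotPart q S).sum id = t} = #(reps q t) := by
  refine card_nbij' (quotPart q) (glue q (n - q * t)) (fun S hS => ?_) (fun T hT => ?_)
    (fun S hS => ?_) (fun T _ => quotPart_glue hq hodd _ T)
  · obtain ⟨hSn, rfl⟩ := mem_filter.mp hS
    exact quotPart_mem_reps hq hodd hSn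
  · refine mem_filter.mpr ⟨glue_mem_reps hq hodd ht hT, ?_⟩
    rw [quotPart_glue hq hodd]
    exact (mem_reps.mp hT).2
  · obtain ⟨hSn, rfl⟩ := mem_filter.mp hS
    rw [← sum_filter_not_dvd (by omega) hSn]
    exact glue_quotPart (mem_reps.mp hSn).1

lemma card_reps (hq : 1 < q) (hodd : Odd q) (n : ℕ) :
    #(reps q n) = ∑ t ∈ range (n / q + 1), #(reps q t) := by
  rw [card_eq_sum_card_fiberwise (f := fun S => (quotPart q S).sum id) fun S hS => ?_]
  · refine sum_congr rfl fun t ht => card_filter_reps_sum_quotPart hq hodd ?_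
    rw [mem_range_succ_iff, Nat.le_div_iff_mul_le (by omega)] at ht
    linarith
  · rw [coe_range, Set.mem_Iio, Nat.lt_succ_iff, Nat.le_div_iff_mul_le (by omega), mul_comm,
      ← (mem_reps.mp hS).2]
    exact mul_sum_quotPart_le (by omega) S

theorem fpq_two_eq_sum (hq : 1 < q) (hodd : Odd q) (n : ℕ) :
    fpq 2 q n = ∑ t ∈ range (n / q + 1), fpq 2 q t := by
  simp only [fpq_two_eq_card_reps, card_reps hq hodd n]

lemma fpq_two_zero (hq : 0 < q) : fpq 2 q 0 = 1 := by
  rw [fpq_two_eq_card_reps, reps_zero hq, card_singleton]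

end Fpq

open Fpq in
theorem stmt8_general (q : ℕ) (hq : 2 < q) (hodd : Odd q) (m r : ℕ) (hr : r < q) :
    fpq 2 q (q * m + r) = 1 + ∑ i ∈ Finset.Icc 1 m, fpq 2 q i := by
  have hdiv : (q * m + r) / q = m := by
    rw [Nat.mul_add_div (by omega), Nat.div_eq_of_lt hr, add_zero]
  rw [fpq_two_eq_sum (by omega) hodd, hdiv, sum_range_succ', fpq_two_zero (by omega), add_comm,
    ← Ico_add_one_right_eq_Icc, sum_Ico_eq_sum_range]
  simp only [add_tsub_cancel_right, add_comm 1]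

theorem stmt8 (q : ℕ) (hq : 2 < q) (hodd : Odd q) (m r : ℕ) (hm : 1 ≤ m) (hr : r < q) :
    fpq 2 q (q * m + r) = 1 + ∑ i ∈ Finset.Icc 1 m, fpq 2 q i :=
  stmt8_general q hq hodd m r hr
end

section
/- Let q > 2 be odd. Then liminf_{x→∞} (1/x)·#{n ≤ x : f_{2,q}(n) is even} ≥ 1/(2q) − 1/(2q²). -/
open Filter Real

/-!
Write `f = fpq 2 q`. As `q` is odd, a term `2^a q^b` is either a power of two or a multiple of `q`,
and every `t` is uniquely a sum of distinct powers of two; so a representation of `n` is the same as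
a representation `T` of some `m ≤ n / q` (scaled by `q`) together with the binary expansion of
`n - q m`. Hence `f n = ∑_{m ≤ n/q} f m`: `f` is constant on the blocks `[q j, q j + q)`, and
`c j = f (q j)` satisfies `c (q m + r) = c (q m) + r c m` for `r < q`.

If `c m` is odd, the parity of `c` alternates on `[q m, q m + q)`, which then holds at least
`(q - 1) / 2` even values of `c`; if `c m` is even, `m` itself is an even value below `q y`.
Weighing the two cases, `c` is even at `(q - 1) / (q + 1) · y` or more of the indices below `q y`,
so `f` is even on a set of lower density at least `(q - 1) / (q (q + 1))`, which exceeds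
`(q - 1) / (2 q²)`.
-/

open Finset

namespace Nat

def powTwoSummands (t : ℕ) : Finset ℕ := t.bitIndices.toFinset.image (2 ^ ·)

lemma exists_eq_two_pow_of_mem_powTwoSummands {t k : ℕ} (hk : k ∈ powTwoSummands t) :
    ∃ a, k = 2 ^ a := by
  obtain ⟨a, -, rfl⟩ := mem_image.1 hk
  exact ⟨a, rfl⟩

lemma sum_image_two_pow (B : Finset ℕ) : (B.image (2 ^ ·)).sum id = ∑ i ∈ B, 2 ^ i :=
  sum_image fun _ _ _ _ h => Nat.pow_right_injective le_rfl h

@[simp]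
lemma sum_powTwoSummands (t : ℕ) : (powTwoSummands t).sum id = t := by
  rw [powTwoSummands, sum_image_two_pow, sum_toFinset_bitIndices_two_pow]

lemma powTwoSummands_sum {P : Finset ℕ} (hP : ∀ k ∈ P, ∃ a, k = 2 ^ a) :
    powTwoSummands (P.sum id) = P := by
  obtain ⟨B, -, rfl⟩ := subset_set_image_iff (s := Set.univ) (f := (2 ^ · : ℕ → ℕ)).1
    fun k hk => by simpa [eq_comm] using hP k hk
  rw [powTwoSummands, sum_image_two_pow, toFinset_bitIndices_sum_two_pow]

end Nat

lemma Odd.not_dvd_two_pow {q : ℕ} (hodd : Odd q) (hq : q ≠ 1) (a : ℕ) : ¬ q ∣ 2 ^ a :=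
  fun h => hq (((Nat.coprime_two_right.2 hodd).pow_right a).eq_one_of_dvd h)

def IsTwoPowMulPow (q k : ℕ) : Prop := ∃ a b : ℕ, k = 2 ^ a * q ^ b

open scoped Classical in
noncomputable def fpqReps (q n : ℕ) : Finset (Finset ℕ) :=
  {S ∈ (range (n + 1)).powerset | (∀ k ∈ S, IsTwoPowMulPow q k) ∧ S.sum id = n}

section

variable {q : ℕ}

lemma isTwoPowMulPow_two_pow (a : ℕ) : IsTwoPowMulPow q (2 ^ a) := ⟨a, 0, by simp⟩

lemma IsTwoPowMulPow.exists_eq_two_pow {k : ℕ} (hk : IsTwoPowMulPow q k) (hdvd : ¬ q ∣ k) :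
    ∃ a, k = 2 ^ a := by
  obtain ⟨a, _ | b, rfl⟩ := hk
  · exact ⟨a, by simp⟩
  · exact absurd ⟨2 ^ a * q ^ b, by ring⟩ hdvd

lemma IsTwoPowMulPow.mul {k : ℕ} (hk : IsTwoPowMulPow q k) : IsTwoPowMulPow q (q * k) := by
  obtain ⟨a, b, rfl⟩ := hk
  exact ⟨a, b + 1, by ring⟩

lemma IsTwoPowMulPow.div (hq : 1 < q) (hodd : Odd q) {k : ℕ} (hk : IsTwoPowMulPow q k)
    (hdvd : q ∣ k) : IsTwoPowMulPow q (k / q) := by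
  obtain ⟨a, _ | b, rfl⟩ := hk
  · exact absurd (by simpa using hdvd) (hodd.not_dvd_two_pow hq.ne' a)
  · exact ⟨a, b, by rw [pow_succ, ← mul_assoc, Nat.mul_div_cancel _ (by omega)]⟩

lemma mem_fpqReps {n : ℕ} {S : Finset ℕ} :
    S ∈ fpqReps q n ↔ (∀ k ∈ S, IsTwoPowMulPow q k) ∧ S.sum id = n := by
  classical
  rw [fpqReps, mem_filter, mem_powerset, and_iff_right_iff_imp]
  rintro ⟨-, rfl⟩ k hk
  exact mem_range_succ_iff.2 (single_le_sum (f := id) (fun _ _ => Nat.zero_le _) hk)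

lemma fpq_eq_card_fpqReps (n : ℕ) : fpq 2 q n = #(fpqReps q n) := by
  rw [fpq, ← Set.ncard_coe_finset]
  congr
  ext S
  simp [mem_fpqReps, IsTwoPowMulPow]

lemma sum_image_mul_left_id (hq : 0 < q) (T : Finset ℕ) :
    (T.image (q * ·)).sum id = q * T.sum id := by
  rw [sum_image fun _ _ _ _ h => Nat.eq_of_mul_eq_mul_left hq h, mul_sum]
  rfl

lemma image_mul_image_div {D : Finset ℕ} (hD : ∀ k ∈ D, q ∣ k) :
    (D.image (· / q)).image (q * ·) = D := by
  rw [image_image]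
  conv_rhs => rw [← image_id (s := D)]
  exact image_congr fun k hk => Nat.mul_div_cancel' (hD k hk)

lemma filter_dvd_image_mul_union_powTwoSummands (hq : 1 < q) (hodd : Odd q) (T : Finset ℕ)
    (t : ℕ) :
    (T.image (q * ·) ∪ Nat.powTwoSummands t).filter (q ∣ ·) = T.image (q * ·) := by
  rw [filter_union, filter_true_of_mem, filter_false_of_mem, union_empty]
  · intro k hk
    obtain ⟨a, rfl⟩ := Nat.exists_eq_two_pow_of_mem_powTwoSummands hk
    exact hodd.not_dvd_two_pow hq.ne' a
  · intro k hk
    obtain ⟨j, -, rfl⟩ := mem_image.1 hk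
    exact dvd_mul_right q j

lemma image_div_filter_dvd_mem_fpqReps (hq : 1 < q) (hodd : Odd q) {m : ℕ} {S : Finset ℕ}
    (hS : ∀ k ∈ S, IsTwoPowMulPow q k) (hsum : (S.filter (q ∣ ·)).sum id = q * m) :
    (S.filter (q ∣ ·)).image (· / q) ∈ fpqReps q m := by
  refine mem_fpqReps.2 ⟨?_, ?_⟩
  · simp only [mem_image, mem_filter]
    rintro _ ⟨k, ⟨hk, hdvd⟩, rfl⟩
    exact (hS k hk).div hq hodd hdvd
  · apply Nat.eq_of_mul_eq_mul_left (by omega : 0 < q)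
    rw [← sum_image_mul_left_id (by omega), image_mul_image_div fun k hk => (mem_filter.1 hk).2,
      hsum]

lemma image_mul_union_powTwoSummands_mem_fpqReps (hq : 1 < q) (hodd : Odd q) {n m : ℕ}
    (hm : q * m ≤ n) {T : Finset ℕ} (hT : T ∈ fpqReps q m) :
    T.image (q * ·) ∪ Nat.powTwoSummands (n - q * m) ∈ fpqReps q n := by
  obtain ⟨hterm, hsum⟩ := mem_fpqReps.1 hT
  have hdisj : Disjoint (T.image (q * ·)) (Nat.powTwoSummands (n - q * m)) := by
    refine disjoint_left.2 fun k hk hk' => ?_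
    obtain ⟨j, -, rfl⟩ := mem_image.1 hk
    obtain ⟨a, ha⟩ := Nat.exists_eq_two_pow_of_mem_powTwoSummands hk'
    exact hodd.not_dvd_two_pow hq.ne' a (ha ▸ dvd_mul_right q j)
  refine mem_fpqReps.2 ⟨fun k hk => ?_, ?_⟩
  · rcases mem_union.1 hk with hk | hk
    · obtain ⟨j, hj, rfl⟩ := mem_image.1 hk
      exact (hterm j hj).mul
    · obtain ⟨a, rfl⟩ := Nat.exists_eq_two_pow_of_mem_powTwoSummands hk
      exact isTwoPowMulPow_two_pow a
  · rw [sum_union hdisj, sum_image_mul_left_id (by omega), Nat.sum_powTwoSummands, hsum]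
    omega

lemma card_filter_fpqReps_eq_card_fpqReps (hq : 1 < q) (hodd : Odd q) {n m : ℕ}
    (hm : q * m ≤ n) :
    #{S ∈ fpqReps q n | (S.filter (q ∣ ·)).sum id / q = m} = #(fpqReps q m) := by
  have hq0 : 0 < q := by omega
  have fiber_iff (S : Finset ℕ) :
      (S.filter (q ∣ ·)).sum id / q = m ↔ (S.filter (q ∣ ·)).sum id = q * m := by
    have hdvd : q ∣ (S.filter (q ∣ ·)).sum id := dvd_sum fun k hk => (mem_filter.1 hk).2
    rw [Nat.div_eq_iff_eq_mul_left hq0 hdvd, mul_comm]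
  refine card_nbij' (fun S => (S.filter (q ∣ ·)).image (· / q))
    (fun T => T.image (q * ·) ∪ Nat.powTwoSummands (n - q * m)) ?_ ?_ ?_ ?_
  · intro S hS
    rw [mem_coe, mem_filter, mem_fpqReps, fiber_iff] at hS
    exact image_div_filter_dvd_mem_fpqReps hq hodd hS.1.1 hS.2
  · intro T hT
    rw [mem_coe, mem_filter, fiber_iff, filter_dvd_image_mul_union_powTwoSummands hq hodd,
      sum_image_mul_left_id hq0, (mem_fpqReps.1 hT).2]
    exact ⟨image_mul_union_powTwoSummands_mem_fpqReps hq hodd hm hT, rfl⟩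
  · intro S hS
    rw [mem_coe, mem_filter, mem_fpqReps, fiber_iff] at hS
    obtain ⟨⟨hterm, hsum⟩, hfib⟩ := hS
    have hrest : n - q * m = (S.filter (¬ q ∣ ·)).sum id := by
      rw [← hsum, ← sum_filter_add_sum_filter_not S (q ∣ ·), hfib, Nat.add_sub_cancel_left]
    simp only
    rw [image_mul_image_div fun k hk => (mem_filter.1 hk).2, hrest,
      Nat.powTwoSummands_sum fun k hk => (hterm k (mem_filter.1 hk).1).exists_eq_two_pow
        (mem_filter.1 hk).2,
      filter_union_filter_not_eq]
  · intro T _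
    simp only
    rw [filter_dvd_image_mul_union_powTwoSummands hq hodd, image_image]
    conv_rhs => rw [← image_id (s := T)]
    exact image_congr fun k _ => Nat.mul_div_cancel_left k hq0

theorem fpq_eq_sum_range (hq : 1 < q) (hodd : Odd q) (n : ℕ) :
    fpq 2 q n = ∑ m ∈ range (n / q + 1), fpq 2 q m := by
  simp only [fpq_eq_card_fpqReps]
  rw [card_eq_sum_card_fiberwise (f := fun S => (S.filter (q ∣ ·)).sum id / q)
    (t := range (n / q + 1))]
  · refine sum_congr rfl fun m hm => card_filter_fpqReps_eq_card_fpqReps hq hodd ?_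
    rw [mem_range, Nat.lt_succ_iff, Nat.le_div_iff_mul_le (by omega), mul_comm] at hm
    exact hm
  · intro S hS
    rw [mem_coe, mem_fpqReps] at hS
    rw [mem_coe, mem_range, Nat.lt_succ_iff, ← hS.2]
    exact Nat.div_le_div_right (sum_le_sum_of_subset (filter_subset _ S))

lemma fpq_mul_add (hq : 1 < q) (hodd : Odd q) (j : ℕ) {r : ℕ} (hr : r < q) :
    fpq 2 q (q * j + r) = fpq 2 q (q * j) := by
  rw [fpq_eq_sum_range hq hodd, fpq_eq_sum_range hq hodd (q * j), Nat.mul_add_div (by omega),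
    Nat.div_eq_of_lt hr, Nat.mul_div_cancel_left _ (by omega), add_zero]

lemma fpq_mul_succ (hq : 1 < q) (hodd : Odd q) (j : ℕ) :
    fpq 2 q (q * (j + 1)) = fpq 2 q (q * j) + fpq 2 q (j + 1) := by
  rw [fpq_eq_sum_range hq hodd, fpq_eq_sum_range hq hodd (q * j),
    Nat.mul_div_cancel_left _ (by omega), Nat.mul_div_cancel_left _ (by omega), sum_range_succ]

lemma fpq_mul_mul_add (hq : 1 < q) (hodd : Odd q) (m : ℕ) {r : ℕ} (hr : r < q) :
    fpq 2 q (q * (q * m + r)) = fpq 2 q (q * (q * m)) + r * fpq 2 q (q * m) := by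
  induction r with
  | zero => simp
  | succ r ih =>
    rw [← add_assoc, fpq_mul_succ hq hodd, ih (by omega), add_assoc (q * m),
      fpq_mul_add hq hodd m hr]
    ring

end

lemma card_filter_range_mul (P : ℕ → Prop) [DecidablePred P] (q y : ℕ) :
    #{j ∈ range (q * y) | P j} = ∑ m ∈ range y, #{r ∈ range q | P (q * m + r)} := by
  simp only [card_filter]
  induction y with
  | zero => simp
  | succ y ih => rw [mul_add_one, sum_range_add, ih, sum_range_succ]

lemma card_filter_even_add_mul_range (c : ℕ) {d : ℕ} (hd : Odd d) (w : ℕ) :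
    #{r ∈ range (2 * w) | Even (c + r * d)} = w := by
  rw [card_filter]
  induction w with
  | zero => simp
  | succ w ih =>
    have hflip : Even (c + (2 * w + 1) * d) ↔ ¬ Even (c + 2 * w * d) := by
      rw [add_one_mul, ← add_assoc, Nat.even_add, iff_false_right (Nat.not_even_iff_odd.2 hd)]
    rw [show 2 * (w + 1) = 2 * w + 1 + 1 by ring, sum_range_succ, sum_range_succ, ih]
    split_ifs <;> simp_all

section

variable {q : ℕ}

lemma card_even_fpq_range_mul (hq : 1 < q) (hodd : Odd q) (y : ℕ) :
    #{n ∈ range (q * y) | Even (fpq 2 q n)} = q * #{j ∈ range y | Even (fpq 2 q (q * j))} := by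
  rw [card_filter_range_mul, card_filter, mul_sum]
  refine sum_congr rfl fun m _ => ?_
  rw [filter_congr fun r hr => by rw [fpq_mul_add hq hodd m (mem_range.1 hr)], filter_const]
  split_ifs <;> simp

lemma half_le_card_even_block (hq : 1 < q) (hodd : Odd q) {m : ℕ}
    (hm : ¬ Even (fpq 2 q (q * m))) :
    q / 2 ≤ #{r ∈ range q | Even (fpq 2 q (q * (q * m + r)))} := by
  obtain ⟨w, hw⟩ := id hodd
  calc q / 2 = #{r ∈ range (2 * w) | Even (fpq 2 q (q * (q * m)) + r * fpq 2 q (q * m))} := by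
        rw [card_filter_even_add_mul_range _ (Nat.not_even_iff_odd.1 hm)]
        omega
    _ ≤ _ := by
      refine card_le_card fun r => ?_
      simp only [mem_filter, mem_range]
      rintro ⟨hr, heven⟩
      exact ⟨by omega, by rwa [fpq_mul_mul_add hq hodd m (by omega)]⟩

lemma sub_one_mul_card_odd_le (hq : 1 < q) (hodd : Odd q) (y : ℕ) :
    (q - 1) * #{j ∈ range y | ¬ Even (fpq 2 q (q * j))} ≤
      2 * #{j ∈ range (q * y) | Even (fpq 2 q (q * j))} := by
  have hq2 : q - 1 = 2 * (q / 2) := by obtain ⟨w, rfl⟩ := hodd; omega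
  rw [card_filter_range_mul, hq2, mul_assoc]
  gcongr
  calc q / 2 * #{j ∈ range y | ¬ Even (fpq 2 q (q * j))}
      = ∑ m ∈ range y with ¬ Even (fpq 2 q (q * m)), q / 2 := by
        rw [sum_const, smul_eq_mul, mul_comm]
    _ ≤ ∑ m ∈ range y with ¬ Even (fpq 2 q (q * m)),
          #{r ∈ range q | Even (fpq 2 q (q * (q * m + r)))} :=
        sum_le_sum fun m hm => half_le_card_even_block hq hodd (mem_filter.1 hm).2
    _ ≤ ∑ m ∈ range y, #{r ∈ range q | Even (fpq 2 q (q * (q * m + r)))} :=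
        sum_le_sum_of_subset (filter_subset _ _)

lemma sub_one_mul_le_card_even (hq : 1 < q) (hodd : Odd q) (y : ℕ) :
    (q - 1) * y ≤ (q + 1) * #{j ∈ range (q * y) | Even (fpq 2 q (q * j))} := by
  have hmono : #{j ∈ range y | Even (fpq 2 q (q * j))} ≤
      #{j ∈ range (q * y) | Even (fpq 2 q (q * j))} :=
    card_le_card <| filter_subset_filter _ <|
      range_subset_range.2 (Nat.le_mul_of_pos_left y (by omega))
  have hsplit := card_filter_add_card_filter_not (s := range y) (fun j => Even (fpq 2 q (q * j)))
  rw [card_range] at hsplit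
  have hodd_le := sub_one_mul_card_odd_le hq hodd y
  calc (q - 1) * y = (q - 1) * #{j ∈ range y | Even (fpq 2 q (q * j))} +
        (q - 1) * #{j ∈ range y | ¬ Even (fpq 2 q (q * j))} := by rw [← mul_add, hsplit]
    _ ≤ (q - 1) * #{j ∈ range (q * y) | Even (fpq 2 q (q * j))} +
        2 * #{j ∈ range (q * y) | Even (fpq 2 q (q * j))} := by gcongr
    _ = (q + 1) * #{j ∈ range (q * y) | Even (fpq 2 q (q * j))} := by
        rw [← add_mul]; congr 1; omega

lemma sub_one_mul_le_card_even_Icc (hq : 1 < q) (hodd : Odd q) (x : ℕ) :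
    (q - 1) * x ≤ q * (q + 1) * (#{n ∈ Icc 1 x | Even (fpq 2 q n)} + q + 1) := by
  set z := x / (q * q)
  have hx : x < q * q * (z + 1) := Nat.lt_mul_div_succ x (by positivity)
  have hcount : q * #{j ∈ range (q * z) | Even (fpq 2 q (q * j))} ≤
      #{n ∈ Icc 1 x | Even (fpq 2 q n)} + 1 := by
    rw [← card_even_fpq_range_mul hq hodd]
    refine (card_le_card fun n hn => ?_).trans (card_insert_le 0 _)
    have : q * (q * z) ≤ x := by rw [← mul_assoc]; exact Nat.mul_div_le x (q * q)
    rw [mem_filter, mem_range] at hn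
    rw [mem_insert, mem_filter, mem_Icc]
    rcases n.eq_zero_or_pos with rfl | hpos
    · exact .inl rfl
    · exact .inr ⟨⟨hpos, by omega⟩, hn.2⟩
  have hdens := sub_one_mul_le_card_even hq hodd z
  set A := #{j ∈ range (q * z) | Even (fpq 2 q (q * j))}
  set N := #{n ∈ Icc 1 x | Even (fpq 2 q n)}
  calc (q - 1) * x ≤ (q - 1) * (q * q * (z + 1)) := Nat.mul_le_mul_left _ hx.le
    _ = q * q * ((q - 1) * z) + (q - 1) * (q * q) := by ring
    _ ≤ q * q * ((q + 1) * A) + (q + 1) * (q * q) := by gcongr; omega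
    _ = q * (q + 1) * (q * A) + q * (q + 1) * q := by ring
    _ ≤ q * (q + 1) * (N + 1) + q * (q + 1) * q := by gcongr
    _ = q * (q + 1) * (N + q + 1) := by ring

end

theorem stmt11 (q : ℕ) (hq : 2 < q) (hodd : Odd q) :
    (1 / (2 * q) - 1 / (2 * q ^ 2) : ℝ) ≤
      Filter.atTop.liminf (fun x : ℕ =>
        (((Finset.Icc 1 x).filter (fun n => Even (fpq 2 q n))).card : ℝ) / x) := by
  have hq1 : 1 < q := by omega
  have hqR : (2 : ℝ) < q := by exact_mod_cast hq
  set a : ℝ := (q - 1) / (q * (q + 1))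
  have htarget : 1 / (2 * q) - 1 / (2 * q ^ 2) < a := by
    have : (1 / (2 * q) - 1 / (2 * q ^ 2) : ℝ) = (q - 1) / (2 * q ^ 2) := by field_simp
    rw [this]
    exact div_lt_div_of_pos_left (by linarith) (by positivity) (by nlinarith)
  have hlower (x : ℕ) (hx : 0 < x) :
      a - (q + 1) / x ≤
        (((Finset.Icc 1 x).filter (fun n => Even (fpq 2 q n))).card : ℝ) / x := by
    have h := sub_one_mul_le_card_even_Icc hq1 hodd x
    rw [← Nat.cast_le (α := ℝ)] at h
    push_cast [Nat.cast_sub hq1.le] at h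
    rw [sub_le_iff_le_add, ← add_div, le_div_iff₀ (by positivity), div_mul_eq_mul_div,
      div_le_iff₀ (by positivity)]
    linarith
  have hlim : Tendsto (fun x : ℕ => a - (q + 1) / (x : ℝ)) atTop (nhds a) := by
    simpa using tendsto_const_nhds.sub (tendsto_const_div_atTop_nhds_zero_nat ((q : ℝ) + 1))
  refine le_liminf_of_le (isCoboundedUnder_ge_of_le atTop (x := 1) fun x => ?_) ?_
  · refine div_le_one_of_le₀ ?_ x.cast_nonneg
    exact_mod_cast (card_filter_le _ _).trans (Nat.card_Icc 1 x).le
  · filter_upwards [hlim.eventually (lt_mem_nhds htarget), eventually_gt_atTop 0] with x hx hx0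
    exact hx.le.trans (hlower x hx0)
end

section
/- f_{2,3}(n) is odd for infinitely many n. -/
/-!
Let `q > 0` divide no power of `2` (e.g. `q = 3`) and let `f n` count the representations of `n`
by distinct numbers `2 ^ a * q ^ b`. In a representation of `n`, the parts divisible by `q` are
`q` times a representation of some `m ≤ n / q`, and the other parts are distinct powers of `2`
summing to `n - q * m`, hence fixed by the binary expansion. So `f n = ∑ m ≤ n / q, f m`, and in
particular `f (q * k) = f (q * k - 1) + f k`. Thus if `f k` is odd, so is one of
`f (q * k - 1)`, `f (q * k)`; starting from `f 1 = 1` this gives odd values beyond every bound.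
-/

open Filter Real

open Finset

open scoped Classical in
noncomputable def reps (p q n : ℕ) : Finset (Finset ℕ) :=
  (range (n + 1)).powerset.filter
    fun S => (∀ k ∈ S, ∃ a b : ℕ, k = p ^ a * q ^ b) ∧ S.sum id = n

theorem mem_reps {p q n : ℕ} {S : Finset ℕ} :
    S ∈ reps p q n ↔ (∀ k ∈ S, ∃ a b : ℕ, k = p ^ a * q ^ b) ∧ S.sum id = n := by
  classical
  rw [reps, mem_filter, mem_powerset, and_iff_right_iff_imp]
  rintro ⟨-, rfl⟩ k hk
  exact mem_range_succ_iff.2 (single_le_sum (fun i _ => Nat.zero_le (id i)) hk)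

theorem fpq_eq_card_reps (p q n : ℕ) : fpq p q n = (reps p q n).card := by
  rw [fpq, ← Set.ncard_coe_finset]
  congr 1
  ext S
  rw [mem_coe, mem_reps, Set.mem_ofPred_eq]

theorem pairwiseDisjoint_reps (p q : ℕ) (s : Set ℕ) : s.PairwiseDisjoint (reps p q) :=
  fun _ _ _ _ hmm' => disjoint_left.2 fun _ h h' =>
    hmm' ((mem_reps.1 h).2.symm.trans (mem_reps.1 h').2)

theorem reps_two_zero {q : ℕ} (hq0 : 0 < q) : reps 2 q 0 = {∅} := by
  ext S
  rw [mem_reps, mem_singleton]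
  constructor
  · rintro ⟨hS, hsum⟩
    refine eq_empty_of_forall_notMem fun k hk => ?_
    obtain ⟨a, b, rfl⟩ := hS k hk
    exact (by positivity : 0 < 2 ^ a * q ^ b).ne' (sum_eq_zero_iff.1 hsum _ hk)
  · rintro rfl
    simp

def twoPowSet (n : ℕ) : Finset ℕ := n.bitIndices.toFinset.image (2 ^ ·)

theorem sum_image_two_pow (s : Finset ℕ) : (s.image (2 ^ ·)).sum id = ∑ i ∈ s, 2 ^ i :=
  sum_image fun _ _ _ _ h => Nat.pow_right_injective le_rfl h

theorem sum_twoPowSet (n : ℕ) : (twoPowSet n).sum id = n := by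
  rw [twoPowSet, sum_image_two_pow, sum_toFinset_bitIndices_two_pow]

theorem twoPowSet_sum {A : Finset ℕ} (hA : ∀ k ∈ A, ∃ a, k = 2 ^ a) :
    twoPowSet (A.sum id) = A := by
  obtain ⟨s, -, rfl⟩ := subset_set_image_iff.1
    (show ↑A ⊆ (2 ^ ·) '' (Set.univ : Set ℕ) from fun k hk => by
      obtain ⟨a, rfl⟩ := hA k hk
      exact ⟨a, trivial, rfl⟩)
  rw [twoPowSet, sum_image_two_pow, toFinset_bitIndices_sum_two_pow]

theorem exists_two_pow_of_mem_twoPowSet {n k : ℕ} (hk : k ∈ twoPowSet n) : ∃ a, k = 2 ^ a := by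
  obtain ⟨a, -, rfl⟩ := mem_image.1 hk
  exact ⟨a, rfl⟩

def divMultiples (q : ℕ) (S : Finset ℕ) : Finset ℕ := (S.filter (q ∣ ·)).image (· / q)

theorem image_mul_divMultiples (q : ℕ) (S : Finset ℕ) :
    (divMultiples q S).image (q * ·) = S.filter (q ∣ ·) := by
  rw [divMultiples, image_image]
  exact (image_congr fun k hk => Nat.mul_div_cancel' (mem_filter.1 hk).2).trans image_id

theorem divMultiples_image_mul {q : ℕ} (hq0 : 0 < q) (T : Finset ℕ) :
    divMultiples q (T.image (q * ·)) = T := by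
  rw [divMultiples, filter_true_of_mem (by simp), image_image]
  exact (image_congr fun t _ => Nat.mul_div_cancel_left t hq0).trans image_id

theorem divMultiples_union_of_not_dvd {q : ℕ} {A : Finset ℕ} (hA : ∀ a ∈ A, ¬ q ∣ a)
    (B : Finset ℕ) : divMultiples q (A ∪ B) = divMultiples q B := by
  rw [divMultiples, divMultiples, filter_union, filter_false_of_mem hA, empty_union]

theorem sum_image_mul {q : ℕ} (hq0 : 0 < q) (T : Finset ℕ) :
    (T.image (q * ·)).sum id = q * T.sum id := by
  rw [sum_image fun _ _ _ _ h => Nat.eq_of_mul_eq_mul_left hq0 h, mul_sum]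
  rfl

theorem sum_filter_dvd {q : ℕ} (hq0 : 0 < q) (S : Finset ℕ) :
    (S.filter (q ∣ ·)).sum id = q * (divMultiples q S).sum id := by
  rw [← image_mul_divMultiples, sum_image_mul hq0]

theorem sum_filter_not_dvd_add {q : ℕ} (hq0 : 0 < q) (S : Finset ℕ) :
    (S.filter (¬ q ∣ ·)).sum id + q * (divMultiples q S).sum id = S.sum id := by
  rw [← sum_filter_dvd hq0, sum_filter_not_add_sum_filter]

theorem exists_two_pow_of_not_dvd {q k : ℕ} (hk : ∃ a b, k = 2 ^ a * q ^ b) (hqk : ¬ q ∣ k) :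
    ∃ a, k = 2 ^ a := by
  obtain ⟨a, b, rfl⟩ := hk
  cases b with
  | zero => exact ⟨a, by rw [pow_zero, mul_one]⟩
  | succ b => exact absurd (Dvd.intro_left (2 ^ a * q ^ b) (by ring)) hqk

theorem exists_div_of_dvd {q k : ℕ} (hq0 : 0 < q) (hq : ∀ a, ¬ q ∣ 2 ^ a)
    (hk : ∃ a b, k = 2 ^ a * q ^ b) (hqk : q ∣ k) : ∃ a b, k / q = 2 ^ a * q ^ b := by
  obtain ⟨a, b, rfl⟩ := hk
  cases b with
  | zero => exact absurd (by simpa using hqk) (hq a)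
  | succ b => exact ⟨a, b, by rw [pow_succ, ← mul_assoc, Nat.mul_div_cancel _ hq0]⟩

theorem not_dvd_of_mem_twoPowSet {q n k : ℕ} (hq : ∀ a, ¬ q ∣ 2 ^ a) (hk : k ∈ twoPowSet n) :
    ¬ q ∣ k := by
  obtain ⟨a, rfl⟩ := exists_two_pow_of_mem_twoPowSet hk
  exact hq a

theorem twoPowSet_union_image_mul_mem_reps {q m n : ℕ} {T : Finset ℕ} (hq0 : 0 < q)
    (hq : ∀ a, ¬ q ∣ 2 ^ a) (hT : T ∈ reps 2 q m) (hqm : q * m ≤ n) :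
    twoPowSet (n - q * m) ∪ T.image (q * ·) ∈ reps 2 q n := by
  obtain ⟨hsmooth, rfl⟩ := mem_reps.1 hT
  refine mem_reps.2 ⟨fun k hk => ?_, ?_⟩
  · rcases mem_union.1 hk with hk | hk
    · obtain ⟨a, rfl⟩ := exists_two_pow_of_mem_twoPowSet hk
      exact ⟨a, 0, by rw [pow_zero, mul_one]⟩
    · obtain ⟨t, ht, rfl⟩ := mem_image.1 hk
      obtain ⟨a, b, rfl⟩ := hsmooth t ht
      exact ⟨a, b + 1, by ring⟩
  · have hdisj : Disjoint (twoPowSet (n - q * T.sum id)) (T.image (q * ·)) :=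
      disjoint_left.2 fun k hk hk' => not_dvd_of_mem_twoPowSet hq hk <| by
        obtain ⟨t, -, rfl⟩ := mem_image.1 hk'
        exact dvd_mul_right q t
    rw [sum_union hdisj, sum_twoPowSet, sum_image_mul hq0]
    omega

theorem twoPowSet_union_image_mul_divMultiples {q n : ℕ} {S : Finset ℕ} (hq0 : 0 < q)
    (hS : S ∈ reps 2 q n) :
    twoPowSet (n - q * (divMultiples q S).sum id) ∪ (divMultiples q S).image (q * ·) = S := by
  obtain ⟨hsmooth, rfl⟩ := mem_reps.1 hS
  have hsplit := sum_filter_not_dvd_add hq0 S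
  have hrest : S.sum id - q * (divMultiples q S).sum id = (S.filter (¬ q ∣ ·)).sum id := by
    omega
  rw [hrest, twoPowSet_sum, image_mul_divMultiples, union_comm, filter_union_filter_not_eq]
  intro k hk
  exact exists_two_pow_of_not_dvd (hsmooth k (mem_filter.1 hk).1) (mem_filter.1 hk).2

theorem card_reps_two_eq_sum {q : ℕ} (hq0 : 0 < q) (hq : ∀ a, ¬ q ∣ 2 ^ a) (n : ℕ) :
    (reps 2 q n).card = ∑ m ∈ range (n / q + 1), (reps 2 q m).card := by
  rw [← card_biUnion (pairwiseDisjoint_reps 2 q _)]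
  refine card_nbij' (divMultiples q) (fun T => twoPowSet (n - q * T.sum id) ∪ T.image (q * ·))
    (fun S hS => ?_) (fun T hT => ?_) (fun S hS => ?_) (fun T _ => ?_)
  · obtain ⟨hsmooth, hsum⟩ := mem_reps.1 hS
    have hsplit := sum_filter_not_dvd_add hq0 S
    refine mem_biUnion.2 ⟨_, mem_range_succ_iff.2 ((Nat.le_div_iff_mul_le hq0).2 ?_),
      mem_reps.2 ⟨fun t ht => ?_, rfl⟩⟩
    · rw [mul_comm]
      omega
    · obtain ⟨k, hk, rfl⟩ := mem_image.1 ht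
      exact exists_div_of_dvd hq0 hq (hsmooth k (mem_filter.1 hk).1) (mem_filter.1 hk).2
  · obtain ⟨m, hm, hTm⟩ := mem_biUnion.1 hT
    have hqm := (Nat.le_div_iff_mul_le hq0).1 (mem_range_succ_iff.1 hm)
    obtain ⟨-, rfl⟩ := mem_reps.1 hTm
    exact twoPowSet_union_image_mul_mem_reps hq0 hq hTm (by rwa [mul_comm])
  · exact twoPowSet_union_image_mul_divMultiples hq0 (mem_coe.1 hS)
  · exact (divMultiples_union_of_not_dvd (fun _ => not_dvd_of_mem_twoPowSet hq) _).trans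
      (divMultiples_image_mul hq0 T)

theorem card_reps_two_mul {q k : ℕ} (hq0 : 0 < q) (hq : ∀ a, ¬ q ∣ 2 ^ a) (hk : 0 < k) :
    (reps 2 q (q * k)).card = (reps 2 q (q * k - 1)).card + (reps 2 q k).card := by
  obtain ⟨j, rfl⟩ := Nat.exists_eq_add_one.2 hk
  have hpred : q * (j + 1) - 1 = q * j + (q - 1) := by rw [mul_add_one]; omega
  rw [card_reps_two_eq_sum hq0 hq, card_reps_two_eq_sum hq0 hq, hpred,
    Nat.mul_div_cancel_left _ hq0, Nat.mul_add_div hq0, Nat.div_eq_of_lt (by omega), add_zero,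
    sum_range_succ]

theorem card_reps_two_one {q : ℕ} (hq0 : 0 < q) (hq : ∀ a, ¬ q ∣ 2 ^ a) :
    (reps 2 q 1).card = 1 := by
  have hq1 : 1 < q := lt_of_le_of_ne hq0 fun h => hq 0 (by rw [← h]; exact one_dvd _)
  rw [card_reps_two_eq_sum hq0 hq, Nat.div_eq_of_lt hq1, zero_add, sum_range_one,
    reps_two_zero hq0, card_singleton]

theorem exists_gt_odd_card_reps_two {q k : ℕ} (hq0 : 0 < q) (hq : ∀ a, ¬ q ∣ 2 ^ a)
    (hk : 0 < k) (hodd : Odd (reps 2 q k).card) : ∃ n, k < n ∧ Odd (reps 2 q n).card := by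
  have hq3 : 3 ≤ q := by
    by_contra! h
    interval_cases q
    · exact hq 0 (one_dvd _)
    · exact hq 1 dvd_rfl
  have hqk : 3 * k ≤ q * k := Nat.mul_le_mul_right k hq3
  rcases Nat.even_or_odd (reps 2 q (q * k - 1)).card with heven | hodd'
  · exact ⟨q * k, by omega, card_reps_two_mul hq0 hq hk ▸ heven.add_odd hodd⟩
  · exact ⟨q * k - 1, by omega, hodd'⟩

theorem exists_gt_odd_fpq_two {q : ℕ} (hq0 : 0 < q) (hq : ∀ a, ¬ q ∣ 2 ^ a) (N : ℕ) :
    ∃ n, N < n ∧ Odd (fpq 2 q n) := by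
  simp only [fpq_eq_card_reps]
  induction N with
  | zero => exact ⟨1, one_pos, by rw [card_reps_two_one hq0 hq]; exact odd_one⟩
  | succ N ih =>
    obtain ⟨n, hNn, hodd⟩ := ih
    obtain ⟨n', hnn', hodd'⟩ := exists_gt_odd_card_reps_two hq0 hq (by omega) hodd
    exact ⟨n', by omega, hodd'⟩

theorem stmt13 : ∀ N : ℕ, ∃ n : ℕ, N ≤ n ∧ Odd (fpq 2 3 n) := by
  have h3 : ∀ a, ¬ 3 ∣ 2 ^ a := fun a h => by
    have := Nat.Prime.dvd_of_dvd_pow Nat.prime_three h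
    omega
  intro N
  obtain ⟨n, hNn, hodd⟩ := exists_gt_odd_fpq_two three_pos h3 N
  exact ⟨n, hNn.le, hodd⟩
end
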